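/- arXiv:1805.02734 — 6 statements merged into one kernel-verified Lean document; each statement's English description precedes it below -/
import Mathlib

section
/- In any Lie ring, for every n ≥ 1 the identity [[a,_{2n} b], a] = [ Σ_{i=0}^{n-1} (-1)^i [[a,_{2n-1-i} b], [a,_i b]] , b ] holds, where [a,_i b] denotes the Engel bracket. -/
/-!
Write `c p q = ⁅[a,_p b], [a,_q b]⁆`. The Jacobi identity gives
`c (p + 1) q = ⁅c p q, b⁆ - c p (q + 1)`: one `b` moves from the left entry to the right one at the
cost of a bracket with `b`. Doing this `n` times starting from `c (2n) 0` produces the alternating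
sum plus the error term `± c n n`, which vanishes.
-/

/-- The Engel bracket: `engel a b n = [a,_n b]`. -/
def engel {L : Type*} [LieRing L] (a b : L) : ℕ → L
  | 0 => a
  | n + 1 => ⁅engel a b n, b⁆

section

variable {L : Type*} [LieRing L] (a b : L)

lemma lie_engel_succ_left (p q : ℕ) :
    ⁅engel a b (p + 1), engel a b q⁆ =
      ⁅⁅engel a b p, engel a b q⁆, b⁆ - ⁅engel a b p, engel a b (q + 1)⁆ := by
  simp only [engel, lie_lie, ← lie_skew b (engel a b q), ← lie_skew b ⁅engel a b p, engel a b q⁆,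
    lie_neg]
  abel

lemma lie_engel_add_left (p d q : ℕ) :
    ⁅engel a b (p + d), engel a b q⁆ =
      ⁅∑ i ∈ Finset.range d, ((-1 : ℤ) ^ i) • ⁅engel a b (p + d - 1 - i), engel a b (q + i)⁆, b⁆ +
        ((-1 : ℤ) ^ d) • ⁅engel a b p, engel a b (q + d)⁆ := by
  induction d generalizing q with
  | zero => simp
  | succ d ih =>
    have shift : ∑ i ∈ Finset.range d,
          ((-1 : ℤ) ^ (i + 1)) • ⁅engel a b (p + d + 1 - 1 - (i + 1)), engel a b (q + (i + 1))⁆ =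
        -∑ i ∈ Finset.range d,
          ((-1 : ℤ) ^ i) • ⁅engel a b (p + d - 1 - i), engel a b (q + 1 + i)⁆ := by
      rw [← Finset.sum_neg_distrib]
      refine Finset.sum_congr rfl fun i _ => ?_
      rw [show p + d + 1 - 1 - (i + 1) = p + d - 1 - i by omega,
        show q + (i + 1) = q + 1 + i by omega, pow_succ, mul_neg_one, neg_smul]
    rw [← add_assoc, lie_engel_succ_left, ih (q + 1), Finset.sum_range_succ', shift,
      Nat.add_sub_cancel, Nat.sub_zero, add_zero, pow_zero, one_smul, add_lie, neg_lie,
      show q + 1 + d = q + (d + 1) by omega, pow_succ, mul_neg_one, neg_smul]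
    abel

end

theorem engel_identity_general {L : Type*} [LieRing L] (a b : L) (n : ℕ) :
    ⁅engel a b (2 * n), a⁆ =
      ⁅∑ i ∈ Finset.range n, ((-1 : ℤ) ^ i) • ⁅engel a b (2 * n - 1 - i), engel a b i⁆, b⁆ := by
  simpa only [← two_mul, zero_add, lie_self, smul_zero, add_zero, engel.eq_1] using
    lie_engel_add_left a b n n 0

theorem engel_identity {L : Type*} [LieRing L] (a b : L) (n : ℕ) (hn : 1 ≤ n) :
    ⁅engel a b (2 * n), a⁆ =
      ⁅∑ i ∈ Finset.range n, ((-1 : ℤ) ^ i) • ⁅engel a b (2 * n - 1 - i), engel a b i⁆, b⁆ :=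
  engel_identity_general a b n
end

section
/- In any Lie ring, the identity [3[C₂,C₁] + 2[C₃,C₀], a] = [2[C₂,C₀,C₀] − [C₁,C₀,C₁], b] holds, where Cₙ = [a,_n b] is the Engel bracket and [x,y,z] denotes the left-normed bracket [[x,y],z]. -/
section LieRing

variable {L : Type*} [LieRing L]

theorem lie_lie_eq_left_normed (x y z : L) : ⁅x, ⁅y, z⁆⁆ = ⁅⁅x, y⁆, z⁆ - ⁅⁅x, z⁆, y⁆ := by
  rw [leibniz_lie, ← lie_skew y ⁅x, z⁆, sub_eq_add_neg]

theorem lie_lie_lie_eq_left_normed (x y z t : L) :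
    ⁅x, ⁅⁅y, z⁆, t⁆⁆ = ⁅⁅⁅x, y⁆, z⁆, t⁆ - ⁅⁅⁅x, z⁆, y⁆, t⁆ - ⁅⁅⁅x, t⁆, y⁆, z⁆ + ⁅⁅⁅x, t⁆, z⁆, y⁆ := by
  rw [lie_lie_eq_left_normed, lie_lie_eq_left_normed, lie_lie_eq_left_normed ⁅x, t⁆, sub_lie]
  abel

theorem lie_lie_lie_self_comm (x y : L) : ⁅⁅⁅x, y⁆, x⁆, y⁆ = ⁅⁅⁅x, y⁆, y⁆, x⁆ := by
  rw [← sub_eq_zero, ← lie_lie_eq_left_normed, lie_self]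

end LieRing

theorem I33_identity {L : Type*} [LieRing L] (a b : L) :
    ⁅(3 : ℤ) • ⁅engel a b 2, engel a b 1⁆ + (2 : ℤ) • ⁅engel a b 3, engel a b 0⁆, a⁆ =
      ⁅(2 : ℤ) • ⁅⁅engel a b 2, engel a b 0⁆, engel a b 0⁆
        - ⁅⁅engel a b 1, engel a b 0⁆, engel a b 1⁆, b⁆ := by
  simp only [engel]
  set c := ⁅a, b⁆
  set u := ⁅c, b⁆
  set v := ⁅c, a⁆
  have h_vb : ⁅v, b⁆ = ⁅u, a⁆ := lie_lie_lie_self_comm a b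
  have h_uc : ⁅u, c⁆ = ⁅⁅u, a⁆, b⁆ - ⁅⁅u, b⁆, a⁆ := lie_lie_eq_left_normed u a b
  have h_vc : ⁅v, c⁆ = ⁅⁅v, a⁆, b⁆ - ⁅⁅u, a⁆, a⁆ := by
    rw [← h_vb]
    exact lie_lie_eq_left_normed v a b
  have h_uv : ⁅u, v⁆ =
      ⁅⁅⁅u, a⁆, b⁆, a⁆ - ⁅⁅⁅u, b⁆, a⁆, a⁆ - ⁅⁅⁅u, a⁆, a⁆, b⁆ + ⁅⁅⁅u, a⁆, b⁆, a⁆ :=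
    lie_lie_lie_eq_left_normed u a b a
  have h_vu : ⁅v, u⁆ =
      ⁅⁅⁅v, a⁆, b⁆, b⁆ - ⁅⁅⁅u, a⁆, a⁆, b⁆ - ⁅⁅⁅u, a⁆, a⁆, b⁆ + ⁅⁅⁅u, a⁆, b⁆, a⁆ := by
    rw [← h_vb]
    exact lie_lie_lie_eq_left_normed v a b b
  have h_skew : ⁅u, v⁆ + ⁅v, u⁆ = 0 := by rw [← lie_skew v u, add_neg_cancel]
  rw [h_uc, h_vc]
  simp only [add_lie, sub_lie, smul_lie]
  linear_combination (norm := module) h_skew - h_uv - h_vu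
end

section
/- In any Lie ring, the identity [2[C₅,C₁] + 5[C₄,C₂], a] = [2[C₄,C₁,C₀] + 3[C₃,C₂,C₀] − 2[C₃,C₁,C₁] + [C₂,C₁,C₂], b] holds, where Cₙ = [a,_n b] is the Engel bracket and [x,y,z] = [[x,y],z]. -/
section LieRing

variable {L : Type*} [LieRing L]

theorem lie_lie_right (x y z : L) : ⁅⁅x, y⁆, z⁆ = ⁅⁅x, z⁆, y⁆ + ⁅x, ⁅y, z⁆⁆ := by
  rw [lie_lie, ← lie_skew ⁅x, z⁆ y]
  abel

theorem lie_lie_sub_lie_lie_add_lie_lie (x y z : L) :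
    ⁅⁅x, y⁆, z⁆ - ⁅⁅x, z⁆, y⁆ + ⁅⁅y, z⁆, x⁆ = 0 := by
  rw [lie_lie_right, ← lie_skew ⁅y, z⁆ x]
  abel

theorem lie_lie_lie_right (x y z w : L) :
    ⁅⁅⁅x, y⁆, z⁆, w⁆ = ⁅⁅⁅x, w⁆, y⁆, z⁆ + ⁅⁅x, ⁅y, w⁆⁆, z⁆ + ⁅⁅x, y⁆, ⁅z, w⁆⁆ := by
  rw [lie_lie_right ⁅x, y⁆, lie_lie_right x y w, add_lie]

theorem lie_lie_engel_lie (a b : L) (i j k : ℕ) :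
    ⁅⁅⁅engel a b i, engel a b j⁆, engel a b k⁆, b⁆ =
      ⁅⁅engel a b (i + 1), engel a b j⁆, engel a b k⁆
        + ⁅⁅engel a b i, engel a b (j + 1)⁆, engel a b k⁆
        + ⁅⁅engel a b i, engel a b j⁆, engel a b (k + 1)⁆ :=
  lie_lie_lie_right _ _ _ _

theorem engel_zero (a b : L) : engel a b 0 = a := rfl

end LieRing

theorem I36_identity {L : Type*} [LieRing L] (a b : L) :
    ⁅(2 : ℤ) • ⁅engel a b 5, engel a b 1⁆ + (5 : ℤ) • ⁅engel a b 4, engel a b 2⁆, a⁆ =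
      ⁅(2 : ℤ) • ⁅⁅engel a b 4, engel a b 1⁆, engel a b 0⁆
        + (3 : ℤ) • ⁅⁅engel a b 3, engel a b 2⁆, engel a b 0⁆
        - (2 : ℤ) • ⁅⁅engel a b 3, engel a b 1⁆, engel a b 1⁆
        + ⁅⁅engel a b 2, engel a b 1⁆, engel a b 2⁆, b⁆ := by
  simp only [add_lie, sub_lie, smul_lie, lie_lie_engel_lie, Nat.reduceAdd, lie_self, zero_lie]
  simp only [engel_zero]
  linear_combination (norm := module)
    -lie_lie_sub_lie_lie_add_lie_lie (engel a b 3) (engel a b 2) (engel a b 1)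
end

section
/- In any Lie ring, the identity [3[[a,b,b],[a,b]] + 2[[a,b,b,b],a], a] = [2[[a,b,b],a,a] − [[a,b],a,[a,b]], b] holds. -/
set_option maxHeartbeats 4000000
set_option maxRecDepth 8000

theorem weight_six_identity {L : Type*} [LieRing L] (a b : L) :
    ⁅(3 : ℤ) • ⁅⁅⁅a, b⁆, b⁆, ⁅a, b⁆⁆ + (2 : ℤ) • ⁅⁅⁅⁅a, b⁆, b⁆, b⁆, a⁆, a⁆ =
      ⁅(2 : ℤ) • ⁅⁅⁅⁅a, b⁆, b⁆, a⁆, a⁆ - ⁅⁅⁅a, b⁆, a⁆, ⁅a, b⁆⁆, b⁆ := by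
  have swap : ∀ x y w : L, ⁅x, ⁅y, w⁆⁆ = ⁅y, ⁅x, w⁆⁆ + ⁅⁅x, y⁆, w⁆ := by
    intro x y w; rw [leibniz_lie]; abel
  have h1 : ∀ w : L, ⁅b, ⁅a, w⁆⁆ = ⁅a, ⁅b, w⁆⁆ - ⁅⁅a, b⁆, w⁆ := by
    intro w; rw [swap b a w, ← lie_skew a b, neg_lie]; abel
  have h2 : ∀ w : L, ⁅⁅a, b⁆, ⁅a, w⁆⁆ = ⁅a, ⁅⁅a, b⁆, w⁆⁆ + ⁅⁅⁅a, b⁆, a⁆, w⁆ := by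
    intro w; rw [swap ⁅a, b⁆ a w]
  have h3 : ∀ w : L, ⁅⁅a, b⁆, ⁅b, w⁆⁆ = ⁅b, ⁅⁅a, b⁆, w⁆⁆ + ⁅⁅⁅a, b⁆, b⁆, w⁆ := by
    intro w; rw [swap ⁅a, b⁆ b w]
  have h4 : ∀ w : L, ⁅⁅⁅a, b⁆, a⁆, ⁅a, w⁆⁆ = ⁅a, ⁅⁅⁅a, b⁆, a⁆, w⁆⁆ + ⁅⁅⁅⁅a, b⁆, a⁆, a⁆, w⁆ := by
    intro w; rw [swap ⁅⁅a, b⁆, a⁆ a w]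
  have h5 : ∀ w : L, ⁅⁅⁅a, b⁆, a⁆, ⁅b, w⁆⁆ = ⁅b, ⁅⁅⁅a, b⁆, a⁆, w⁆⁆ + ⁅⁅⁅⁅a, b⁆, a⁆, b⁆, w⁆ := by
    intro w; rw [swap ⁅⁅a, b⁆, a⁆ b w]
  have h6 : ∀ w : L, ⁅⁅⁅a, b⁆, b⁆, ⁅a, w⁆⁆ = ⁅a, ⁅⁅⁅a, b⁆, b⁆, w⁆⁆ + ⁅⁅⁅⁅a, b⁆, b⁆, a⁆, w⁆ := by
    intro w; rw [swap ⁅⁅a, b⁆, b⁆ a w]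
  have h7 : ∀ w : L, ⁅⁅⁅a, b⁆, b⁆, ⁅b, w⁆⁆ = ⁅b, ⁅⁅⁅a, b⁆, b⁆, w⁆⁆ + ⁅⁅⁅⁅a, b⁆, b⁆, b⁆, w⁆ := by
    intro w; rw [swap ⁅⁅a, b⁆, b⁆ b w]
  have hba : ⁅b, a⁆ = -⁅a, b⁆ := (lie_skew b a).symm
  have hf : ⁅⁅⁅a, b⁆, a⁆, b⁆ = -⁅a, ⁅⁅a, b⁆, b⁆⁆ := by
    rw [lie_lie, lie_self, lie_lie]; abel
  have hf' : ⁅⁅⁅a, b⁆, a⁆, b⁆ = -⁅a, ⁅⁅a, b⁆, b⁆⁆ := by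
    rw [lie_lie, lie_self, lie_lie]; abel
  have hg : ⁅⁅⁅⁅a, b⁆, a⁆, a⁆, b⁆ = -⁅⁅a, b⁆, ⁅⁅a, b⁆, a⁆⁆ + ⁅a, ⁅a, ⁅⁅a, b⁆, b⁆⁆⁆ := by
    rw [lie_lie, hf', ← lie_skew ⁅a, b⁆ ⁅⁅a, b⁆, a⁆, lie_neg]; abel
  have hdc : ⁅⁅⁅a, b⁆, a⁆, ⁅a, b⁆⁆ = -⁅⁅a, b⁆, ⁅⁅a, b⁆, a⁆⁆ := (lie_skew _ _).symm
  simp only [lie_lie, add_lie, sub_lie, smul_lie, lie_add, lie_sub, lie_smul, lie_neg, neg_lie,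
    lie_self, smul_zero, zero_lie, lie_zero, smul_sub, smul_add, smul_neg, hba]
  simp only [h1, h2, h3, h4, h5, h6, h7, hg, hf, hdc, lie_add, lie_sub, lie_neg, lie_self, lie_zero, zero_lie]
  have k3 : ⁅a, ⁅⁅a, b⁆, b⁆⁆ = ⁅b, ⁅⁅a, b⁆, a⁆⁆ := by
    rw [← lie_skew (x := b) (y := ⁅⁅a, b⁆, a⁆), hf, neg_neg]
  have k1 : ⁅⁅⁅a, b⁆, a⁆, ⁅⁅a, b⁆, b⁆⁆ =
      ⁅⁅a, b⁆, ⁅b, ⁅⁅a, b⁆, a⁆⁆⁆ - ⁅a, ⁅⁅a, b⁆, ⁅⁅a, b⁆, b⁆⁆⁆ := by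
    rw [lie_lie, k3]
  have k2 : ⁅⁅⁅a, b⁆, b⁆, ⁅⁅a, b⁆, a⁆⁆ =
      ⁅⁅a, b⁆, ⁅b, ⁅⁅a, b⁆, a⁆⁆⁆ - ⁅b, ⁅⁅a, b⁆, ⁅⁅a, b⁆, a⁆⁆⁆ := lie_lie _ _ _
  have hed : ⁅⁅⁅a, b⁆, b⁆, ⁅⁅a, b⁆, a⁆⁆ =
      ⁅a, ⁅⁅a, b⁆, ⁅⁅a, b⁆, b⁆⁆⁆ - ⁅⁅a, b⁆, ⁅b, ⁅⁅a, b⁆, a⁆⁆⁆ := by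
    rw [← lie_skew (x := ⁅⁅a, b⁆, b⁆) (y := ⁅⁅a, b⁆, a⁆), k1]; abel
  have k6 : ⁅b, ⁅⁅a, b⁆, ⁅⁅a, b⁆, a⁆⁆⁆ =
      (2 : ℤ) • ⁅⁅a, b⁆, ⁅b, ⁅⁅a, b⁆, a⁆⁆⁆ - ⁅a, ⁅⁅a, b⁆, ⁅⁅a, b⁆, b⁆⁆⁆ := by
    have h := k2.symm.trans hed
    rw [eq_sub_iff_add_eq, two_smul]
    exact (add_comm _ _).trans (sub_eq_sub_iff_add_eq_add.mp h).symm
  abel_nf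
  rw [k1, k6]
  simp only [smul_sub, smul_add, smul_smul]
  abel
end

section
/- In any Lie ring with elements a, b and Cₙ the Engel bracket, if k > l+1 and k = m then [[[C_k, C_l], C_m], b] = 2[[C_{k+1}, C_l], C_m] + [[C_k, C_{l+1}], C_m] − [[C_{k+1}, C_k], C_l]. -/
/-!
Bracketing with `b` on the right is a derivation, so `[[[x, y], x], b]` expands into three terms;
the Jacobi identity rewrites the cross term `[[x, y], [x, b]]` as
`[[[x, b], y], x] - [[[x, b], x], y]`.
-/

section LieRing

variable {L : Type*} [LieRing L]

theorem lie_lie_right_eq_add (x y b : L) : ⁅⁅x, y⁆, b⁆ = ⁅⁅x, b⁆, y⁆ + ⁅x, ⁅y, b⁆⁆ := by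
  rw [lie_lie, ← lie_skew y, ← lie_skew ⁅x, b⁆, lie_neg]
  abel

theorem lie_lie_eq_lie_lie_sub_lie_lie (x y z : L) :
    ⁅⁅x, y⁆, z⁆ = ⁅⁅z, y⁆, x⁆ - ⁅⁅z, x⁆, y⁆ := by
  rw [lie_lie_right_eq_add z y x, add_sub_cancel_left, ← lie_skew z, ← lie_skew x y, neg_lie]

theorem lie_lie_lie_self_lie (x y b : L) :
    ⁅⁅⁅x, y⁆, x⁆, b⁆ = (2 : ℤ) • ⁅⁅⁅x, b⁆, y⁆, x⁆ + ⁅⁅x, ⁅y, b⁆⁆, x⁆ - ⁅⁅⁅x, b⁆, x⁆, y⁆ := by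
  rw [lie_lie_right_eq_add, lie_lie_right_eq_add x y b, add_lie,
    lie_lie_eq_lie_lie_sub_lie_lie x y ⁅x, b⁆, two_zsmul]
  abel

end LieRing

theorem expand_case_four_general {L : Type*} [LieRing L] (a b : L) (k l m : ℕ)
    (h2 : k = m) :
    ⁅⁅⁅engel a b k, engel a b l⁆, engel a b m⁆, b⁆ =
      (2 : ℤ) • ⁅⁅engel a b (k + 1), engel a b l⁆, engel a b m⁆
      + ⁅⁅engel a b k, engel a b (l + 1)⁆, engel a b m⁆
      - ⁅⁅engel a b (k + 1), engel a b k⁆, engel a b l⁆ := by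
  subst h2
  exact lie_lie_lie_self_lie (engel a b k) (engel a b l) b

theorem expand_case_four {L : Type*} [LieRing L] (a b : L) (k l m : ℕ)
    (h1 : k > l + 1) (h2 : k = m) :
    ⁅⁅⁅engel a b k, engel a b l⁆, engel a b m⁆, b⁆ =
      (2 : ℤ) • ⁅⁅engel a b (k + 1), engel a b l⁆, engel a b m⁆
      + ⁅⁅engel a b k, engel a b (l + 1)⁆, engel a b m⁆
      - ⁅⁅engel a b (k + 1), engel a b k⁆, engel a b l⁆ :=
  expand_case_four_general a b k l m h2
end

section
/- A word of the form a b^i a b^j a b^t (with i,j,t ≥ 0) in the alphabet {a,b} with a < b is a Lyndon word if and only if i ≤ j and i < t. -/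
/-!
Every suffix beginning with `b` exceeds a word beginning with `a`, so `a b^i a b^j a b^t` is
Lyndon iff it is smaller than its two suffixes `a b^j a b^t` and `a b^t`. Comparing the leading
blocks of `b`s, the second comparison holds iff `i < t`, and the first iff `i < j`, or `i = j`
and the second one holds.
-/

/-- A word over `Bool` (with `false = a < true = b`) is a Lyndon word if it is nonempty and
strictly smaller in lexicographic order than all of its proper nonempty suffixes. -/
def IsLyndon (w : List Bool) : Prop :=
  w ≠ [] ∧ ∀ i, 0 < i → i < w.length → List.Lex (· < ·) w (w.drop i)

namespace List

variable {α : Type*} [LinearOrder α]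

theorem replicate_append_cons_lt_replicate_append {a b : α} (hab : a < b) {m n : ℕ}
    (hmn : m < n) (x y : List α) : replicate m b ++ a :: x < replicate n b ++ y := by
  obtain ⟨k, rfl⟩ := Nat.exists_eq_add_of_lt hmn
  rw [Nat.add_assoc, ← replicate_append_replicate, replicate_succ, append_assoc, cons_append]
  exact append_left_lt (Lex.rel hab)

theorem replicate_append_cons_lt_replicate {a b : α} (hab : a < b) {m n : ℕ} (hmn : m < n)
    (x : List α) : replicate m b ++ a :: x < replicate n b := by
  simpa using replicate_append_cons_lt_replicate_append hab hmn x []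

theorem not_replicate_append_lt_replicate (b : α) {m n : ℕ} (hnm : n ≤ m) (x : List α) :
    ¬ replicate m b ++ x < replicate n b := by
  obtain ⟨k, rfl⟩ := Nat.exists_eq_add_of_le hnm
  rw [← replicate_append_replicate, append_assoc]
  exact IsPrefix.le (prefix_append _ _)

def LtSuffixes (w l : List α) : Prop :=
  ∀ v, v <:+ l → v ≠ [] → w < v

theorem ltSuffixes_nil (w : List α) : LtSuffixes w [] :=
  fun _ hv hne => absurd (suffix_nil.1 hv) hne

theorem LtSuffixes.cons {w l : List α} {a : α} (ha : w < a :: l) (hl : LtSuffixes w l) :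
    LtSuffixes w (a :: l) := by
  intro v hv hne
  rcases suffix_cons_iff.1 hv with rfl | hv
  · exact ha
  · exact hl v hv hne

theorem LtSuffixes.replicate_append {a b : α} (hab : a < b) {u l : List α}
    (hl : LtSuffixes (a :: u) l) (n : ℕ) : LtSuffixes (a :: u) (replicate n b ++ l) := by
  induction n with
  | zero => simpa
  | succ n ih => exact .cons (Lex.rel hab) ih

theorem ltSuffixes_replicate {a b : α} (hab : a < b) (u : List α) (n : ℕ) :
    LtSuffixes (a :: u) (replicate n b) := by
  simpa using (ltSuffixes_nil _).replicate_append hab n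

end List

open List

theorem isLyndon_cons_iff (a : Bool) (l : List Bool) :
    IsLyndon (a :: l) ↔ LtSuffixes (a :: l) l := by
  constructor
  · rintro ⟨-, h⟩ v hv hne
    have hlt : l.length - v.length < l.length := by
      have := hv.length_le
      have := length_pos_iff.2 hne
      omega
    have := h (l.length - v.length + 1) (Nat.succ_pos _) (by simpa using hlt)
    rwa [drop_succ_cons, ← suffix_iff_eq_drop.1 hv] at this
  · refine fun h => ⟨cons_ne_nil _ _, fun k hk hkl => ?_⟩
    obtain ⟨k, rfl⟩ := Nat.exists_eq_add_of_lt hk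
    rw [zero_add, drop_succ_cons]
    exact h _ (drop_suffix _ _) (by simpa using hkl)

theorem lyndon_abiabjabt (i j t : ℕ) :
    IsLyndon ([false] ++ List.replicate i true ++ [false] ++ List.replicate j true
      ++ [false] ++ List.replicate t true) ↔ i ≤ j ∧ i < t := by
  set v₁ := false :: (replicate j true ++ false :: replicate t true)
  set v₂ := false :: replicate t true
  have hw : [false] ++ replicate i true ++ [false] ++ replicate j true ++ [false] ++
      replicate t true = false :: (replicate i true ++ v₁) := by
    simp [v₁]
  rw [hw, isLyndon_cons_iff]
  have hab := Bool.false_lt_true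
  constructor
  · intro h
    have h₁ := h v₁ (suffix_append _ _) (cons_ne_nil _ _)
    have h₂ := h v₂ ((suffix_append _ _).trans ((suffix_cons _ _).trans (suffix_append _ _)))
      (cons_ne_nil _ _)
    refine ⟨le_of_not_gt fun hji => ?_, lt_of_not_ge fun hti => ?_⟩
    · exact lt_asymm h₁ (.cons (replicate_append_cons_lt_replicate_append hab hji _ _))
    · exact not_replicate_append_lt_replicate true hti _ (lex_cons_iff.1 h₂)
  · rintro ⟨hij, hit⟩
    have h₂ : false :: (replicate i true ++ v₁) < v₂ :=
      .cons (replicate_append_cons_lt_replicate hab hit _)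
    have h₁ : false :: (replicate i true ++ v₁) < v₁ := by
      refine .cons ?_
      rcases hij.lt_or_eq with hij | rfl
      · exact replicate_append_cons_lt_replicate_append hab hij _ _
      · exact append_left_lt (.cons (replicate_append_cons_lt_replicate hab hit _))
    exact .replicate_append hab (.cons h₁ (.replicate_append hab
      (.cons h₂ (ltSuffixes_replicate hab _ t)) j)) i
end
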